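/- Let P be a Borel probability measure on ℝ^d such that for every x ∈ supp(P), liminf_{r→0} P(B(x,r))/r^d > 0. Let K : ℝ^d → ℝ be a nonnegative kernel with K(0) > 0 that is continuous at 0, let {h_n} be positive bandwidths with h_n → 0, and let {c_n} be nonnegative real numbers with c_n → 0. Then for every x ∈ supp(P) there exists N such that p_{h_n}(x) ≥ 2c_n for all n ≥ N; equivalently, the sets supp(P) \ p_{h_n}^{-1}([2c_n, ∞)) decrease to the empty set pointwise as n → ∞. -/

import Mathlib

open MeasureTheory Metric Filter
open scoped ENNReal

/-- The support of a measure `P`: points all of whose neighborhoods have positive mass. -/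
def msupp {d : ℕ} (P : Measure (EuclideanSpace ℝ (Fin d))) : Set (EuclideanSpace ℝ (Fin d)) :=
  {x | ∀ r > 0, 0 < P (ball x r)}

/-- The average kernel density estimator `p_h(x) = ∫ h^{-d} K((x-y)/h) dP(y)`
(for a nonnegative kernel, as a Lebesgue integral). -/
noncomputable def avgKDE {d : ℕ} (P : Measure (EuclideanSpace ℝ (Fin d)))
    (K : EuclideanSpace ℝ (Fin d) → ℝ) (h : ℝ) (x : EuclideanSpace ℝ (Fin d)) : ℝ≥0∞ :=
  ∫⁻ y, ENNReal.ofReal ((1 / h ^ d) * K (h⁻¹ • (x - y))) ∂P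

open Topology
open scoped NNReal

theorem exists_pos_eventually_mul_le_measure_ball {X : Type*} [PseudoMetricSpace X]
    [MeasurableSpace X] {μ : Measure X} {x : X} {d : ℕ}
    (hμ : 0 < liminf (fun r : ℝ => μ (ball x r) / ENNReal.ofReal (r ^ d)) (𝓝[>] 0)) :
    ∃ a : ℝ≥0, 0 < a ∧ ∀ᶠ r in 𝓝[>] (0 : ℝ), a * ENNReal.ofReal (r ^ d) ≤ μ (ball x r) := by
  obtain ⟨a, ha, haL⟩ := ENNReal.lt_iff_exists_nnreal_btwn.1 hμ
  refine ⟨a, ENNReal.coe_pos.1 ha, ?_⟩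
  filter_upwards [eventually_lt_of_lt_liminf haL, self_mem_nhdsWithin] with r hr (hr0 : 0 < r)
  have hrd : ENNReal.ofReal (r ^ d) ≠ 0 := by positivity
  exact (ENNReal.le_div_iff_mul_le (.inl hrd) (.inl ENNReal.ofReal_ne_top)).1 hr.le

theorem ofReal_div_pow_mul_measure_ball_le_avgKDE {d : ℕ} (P : Measure (EuclideanSpace ℝ (Fin d)))
    {K : EuclideanSpace ℝ (Fin d) → ℝ} {δ m h : ℝ} (hh : 0 < h)
    (hK : ∀ y, ‖y‖ < δ → m ≤ K y) (x : EuclideanSpace ℝ (Fin d)) :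
    ENNReal.ofReal (m / h ^ d) * P (ball x (δ * h)) ≤ avgKDE P K h x := by
  rw [avgKDE, ← lintegral_indicator_const measurableSet_ball]
  refine lintegral_mono fun y => ?_
  by_cases hy : y ∈ ball x (δ * h)
  · rw [Set.indicator_of_mem hy, one_div_mul_eq_div]
    have hxy : ‖h⁻¹ • (x - y)‖ < δ := by
      rw [mem_ball', dist_eq_norm] at hy
      rwa [norm_smul, norm_inv, Real.norm_of_nonneg hh.le, inv_mul_lt_iff₀ hh, mul_comm]
    gcongr
    exact hK _ hxy
  · rw [Set.indicator_of_notMem hy]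
    exact zero_le

/-- The mass `≳ (δ h)^d` of the ball on which the rescaled kernel exceeds `K 0 / 2` compensates
the normalisation `h^{-d}`. -/
theorem exists_pos_eventually_le_avgKDE {d : ℕ} {P : Measure (EuclideanSpace ℝ (Fin d))}
    {x : EuclideanSpace ℝ (Fin d)}
    (hP : 0 < liminf (fun r : ℝ => P (ball x r) / ENNReal.ofReal (r ^ d)) (𝓝[>] 0))
    {K : EuclideanSpace ℝ (Fin d) → ℝ} (hKpos : 0 < K 0) (hKcont : ContinuousAt K 0)
    {ι : Type*} {l : Filter ι} {h : ι → ℝ} (hh : Tendsto h l (𝓝[>] 0)) :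
    ∃ ε : ℝ≥0∞, 0 < ε ∧ ∀ᶠ i in l, ε ≤ avgKDE P K (h i) x := by
  obtain ⟨δ, hδ, hKδ⟩ : ∃ δ > 0, ∀ y, dist y 0 < δ → K 0 / 2 < K y :=
    eventually_nhds_iff.1 (hKcont.eventually (lt_mem_nhds (half_lt_self hKpos)))
  obtain ⟨a, ha, hball⟩ := exists_pos_eventually_mul_le_measure_ball hP
  have hδh : Tendsto (fun i => δ * h i) l (𝓝[>] 0) := by
    refine tendsto_nhdsWithin_iff.2 ⟨?_, (hh.eventually self_mem_nhdsWithin).mono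
      fun i (hi : 0 < h i) => mul_pos hδ hi⟩
    simpa using (tendsto_nhdsWithin_iff.1 hh).1.const_mul δ
  refine ⟨a * ENNReal.ofReal (K 0 / 2 * δ ^ d), by positivity, ?_⟩
  filter_upwards [hδh.eventually hball, hh.eventually self_mem_nhdsWithin]
    with i hi (hhi : 0 < h i)
  have hbound := ofReal_div_pow_mul_measure_ball_le_avgKDE P hhi
    (fun y hy => (hKδ y (by rwa [dist_zero_right])).le) x
  calc a * ENNReal.ofReal (K 0 / 2 * δ ^ d)
      = ENNReal.ofReal (K 0 / 2 / h i ^ d) * (a * ENNReal.ofReal ((δ * h i) ^ d)) := by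
        rw [mul_left_comm, ← ENNReal.ofReal_mul (by positivity)]
        congr 2
        rw [mul_pow]
        field_simp
    _ ≤ avgKDE P K (h i) x := (mul_le_mul_right hi _).trans hbound

theorem stmt14_general {d : ℕ} (P : Measure (EuclideanSpace ℝ (Fin d)))
    (hP : ∀ x ∈ msupp P,
      0 < liminf (fun r : ℝ => P (ball x r) / ENNReal.ofReal (r ^ d))
        (nhdsWithin (0 : ℝ) (Set.Ioi 0)))
    (K : EuclideanSpace ℝ (Fin d) → ℝ) (hKpos : 0 < K 0)
    (hKcont : ContinuousAt K 0)
    (h : ℕ → ℝ) (hhpos : ∀ n, 0 < h n) (hhlim : Tendsto h atTop (nhds 0))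
    (c : ℕ → ℝ) (hclim : Tendsto c atTop (nhds 0)) :
    (∀ x ∈ msupp P, ∃ N : ℕ, ∀ n ≥ N,
        ENNReal.ofReal (2 * c n) ≤ avgKDE P K (h n) x) ∧
      ∀ x, ∃ N : ℕ, ∀ n ≥ N,
        x ∉ msupp P \ {y | ENNReal.ofReal (2 * c n) ≤ avgKDE P K (h n) y} := by
  have hh : Tendsto h atTop (𝓝[>] 0) :=
    tendsto_nhdsWithin_iff.2 ⟨hhlim, .of_forall hhpos⟩
  have hc : Tendsto (fun n => ENNReal.ofReal (2 * c n)) atTop (𝓝 0) := by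
    simpa using ENNReal.tendsto_ofReal (hclim.const_mul 2)
  have key : ∀ x ∈ msupp P, ∃ N : ℕ, ∀ n ≥ N,
      ENNReal.ofReal (2 * c n) ≤ avgKDE P K (h n) x := by
    intro x hx
    obtain ⟨ε, hε, hKDE⟩ := exists_pos_eventually_le_avgKDE (hP x hx) hKpos hKcont hh
    exact eventually_atTop.1 <|
      (hc.eventually_lt_const hε).mp (hKDE.mono fun n hn hcn => hcn.le.trans hn)
  refine ⟨key, fun x => ?_⟩
  by_cases hx : x ∈ msupp P
  · obtain ⟨N, hN⟩ := key x hx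
    exact ⟨N, fun n hn hmem => hmem.2 (hN n hn)⟩
  · exact ⟨0, fun n _ hmem => hx hmem.1⟩

theorem stmt14 {d : ℕ} (P : Measure (EuclideanSpace ℝ (Fin d))) [IsProbabilityMeasure P]
    (hP : ∀ x ∈ msupp P,
      0 < liminf (fun r : ℝ => P (ball x r) / ENNReal.ofReal (r ^ d))
        (nhdsWithin (0 : ℝ) (Set.Ioi 0)))
    (K : EuclideanSpace ℝ (Fin d) → ℝ) (hK0 : ∀ y, 0 ≤ K y) (hKpos : 0 < K 0)
    (hKcont : ContinuousAt K 0)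
    (h : ℕ → ℝ) (hhpos : ∀ n, 0 < h n) (hhlim : Tendsto h atTop (nhds 0))
    (c : ℕ → ℝ) (hc0 : ∀ n, 0 ≤ c n) (hclim : Tendsto c atTop (nhds 0)) :
    (∀ x ∈ msupp P, ∃ N : ℕ, ∀ n ≥ N,
        ENNReal.ofReal (2 * c n) ≤ avgKDE P K (h n) x) ∧
      ∀ x, ∃ N : ℕ, ∀ n ≥ N,
        x ∉ msupp P \ {y | ENNReal.ofReal (2 * c n) ≤ avgKDE P K (h n) y} :=
  stmt14_general P hP K hKpos hKcont h hhpos hhlim c hclim
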